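/- Suppose V : ℝ^n → ℝ is C¹, V(x_e) = 0, V(x) > 0 for x ≠ x_e in an open neighborhood Ω of x_e, and the Lie derivative ⟨∇V(x), f(x)⟩ < 0 for all x ∈ Ω \ {x_e}, where f is locally Lipschitz with f(x_e) = 0. Then x_e is asymptotically stable for ẋ = f(x). -/

import Mathlib

/-!
Along a solution, `t ↦ V (x t)` has derivative `⟪∇V, f⟫ ≤ 0` while the solution stays in `Ω`, so
`V` cannot increase. Taking `δ` so small that `V < min_{‖y - xe‖ = r} V` on the `δ`-ball, the
sublevel set `{‖y - xe‖ ≤ r, V y ≤ V (x 0)}` is closed, misses the sphere, and is therefore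
never left: this is stability. A solution staying in `‖y - xe‖ ≥ ρ` would live in a compact
annulus on which `⟪∇V, f⟫ ≤ -a < 0`, so `V (x t) ≤ V (x 0) - a t` would become negative; hence
every solution enters every neighbourhood of `xe`, and stability keeps it there.
-/

open Metric Set Filter Topology

variable {E : Type*} [NormedAddCommGroup E] [NormedSpace ℝ E] {f : E → E} {V : E → ℝ}
  {x : ℝ → E} {Ω : Set E} {xe : E}

def IsSolution (f : E → E) (x : ℝ → E) : Prop :=
  ∀ t, HasDerivAt x (f (x t)) t

namespace IsSolution

theorem continuous (hx : IsSolution f x) : Continuous x :=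
  continuous_iff_continuousAt.2 fun t => (hx t).continuousAt

theorem comp_add_const (hx : IsSolution f x) (T : ℝ) : IsSolution f fun t => x (t + T) :=
  fun t => (hx (t + T)).comp_add_const t T

theorem hasDerivAt_comp (hx : IsSolution f x) (hV : Differentiable ℝ V) (t : ℝ) :
    HasDerivAt (fun s => V (x s)) (fderiv ℝ V (x t) (f (x t))) t :=
  (hV (x t)).hasFDerivAt.comp_hasDerivAt t (hx t)

theorem antitoneOn_comp_add_mul (hx : IsSolution f x) (hV : Differentiable ℝ V) {I : Set ℝ}
    (hI : Convex ℝ I) {a : ℝ} (hLie : ∀ t ∈ I, fderiv ℝ V (x t) (f (x t)) ≤ -a) :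
    AntitoneOn (fun t => V (x t) + a * t) I := by
  have hderiv : ∀ t, HasDerivAt (fun s => V (x s) + a * s)
      (fderiv ℝ V (x t) (f (x t)) + a) t := fun t => by
    simpa using (hx.hasDerivAt_comp hV t).fun_add ((hasDerivAt_id t).const_mul a)
  refine antitoneOn_of_hasDerivWithinAt_nonpos hI
    (fun t _ => (hderiv t).continuousAt.continuousWithinAt)
    (fun t _ => (hderiv t).hasDerivWithinAt) fun t ht => ?_
  linarith [hLie t (interior_subset ht)]

theorem antitoneOn_comp (hx : IsSolution f x) (hV : Differentiable ℝ V) {I : Set ℝ}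
    (hI : Convex ℝ I) (hLie : ∀ t ∈ I, fderiv ℝ V (x t) (f (x t)) ≤ 0) :
    AntitoneOn (fun t => V (x t)) I := by
  simpa using hx.antitoneOn_comp_add_mul hV hI (a := 0) (by simpa using hLie)

theorem mem_ball_of_lt_sphere (hx : IsSolution f x) (hV : Differentiable ℝ V)
    (hLie : ∀ y ∈ Ω, fderiv ℝ V y (f y) ≤ 0) {r : ℝ} (hΩ : closedBall xe r ⊆ Ω)
    (hx0 : x 0 ∈ ball xe r) (hsphere : ∀ y ∈ sphere xe r, V (x 0) < V y) {t : ℝ}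
    (ht : 0 ≤ t) : x t ∈ ball xe r := by
  set K := closedBall xe r ∩ {y | V y ≤ V (x 0)}
  have hK_ball : K ⊆ ball xe r := fun y ⟨hy, hVy⟩ =>
    (mem_closedBall.1 hy).lt_of_ne fun h => (hsphere y h).not_ge hVy
  have hK : IsClosed K := isClosed_closedBall.inter (isClosed_le hV.continuous continuous_const)
  suffices Icc 0 t ⊆ x ⁻¹' K from hK_ball (this ⟨ht, le_rfl⟩)
  refine ((hK.preimage hx.continuous).inter isClosed_Icc).Icc_subset_of_forall_mem_nhdsWithin
    ⟨ball_subset_closedBall hx0, le_refl (V (x 0))⟩ ?_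
  rintro u ⟨hu, -⟩
  obtain ⟨w, hw, hw_ball⟩ := mem_nhdsGE_iff_exists_Ico_subset.1 <| nhdsWithin_le_nhds <|
    hx.continuous.continuousAt.preimage_mem_nhds (isOpen_ball.mem_nhds (hK_ball hu))
  filter_upwards [Ioo_mem_nhdsGT hw] with v hv
  have hLie_uv : ∀ s ∈ Icc u v, fderiv ℝ V (x s) (f (x s)) ≤ 0 := fun s hs =>
    hLie _ (hΩ (ball_subset_closedBall (hw_ball ⟨hs.1, hs.2.trans_lt hv.2⟩)))
  exact ⟨ball_subset_closedBall (hw_ball ⟨hv.1.le, hv.2⟩),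
    (hx.antitoneOn_comp hV (convex_Icc u v) hLie_uv ⟨le_rfl, hv.1.le⟩ ⟨hv.1.le, le_rfl⟩
      hv.1.le).trans hu.2⟩

theorem exists_mem_ball [ProperSpace E] (hx : IsSolution f x) (hV : ContDiff ℝ 1 V)
    (hf : Continuous f) (hV_nonneg : ∀ y ∈ Ω, 0 ≤ V y)
    (hLie : ∀ y ∈ Ω, y ≠ xe → fderiv ℝ V y (f y) < 0) {r : ℝ} (hΩ : closedBall xe r ⊆ Ω)
    (hx_mem : ∀ t ≥ 0, x t ∈ closedBall xe r) {ρ : ℝ} (hρ : 0 < ρ) :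
    ∃ T ≥ 0, x T ∈ ball xe ρ := by
  by_contra! hout
  have hW : Continuous fun y => fderiv ℝ V y (f y) :=
    (hV.continuous_fderiv one_ne_zero).clm_apply hf
  obtain ⟨a, ha, ha_le⟩ := ((isCompact_closedBall xe r).diff isOpen_ball).exists_forall_le'
    hW.neg.continuousOn (a := 0) fun y hy =>
      neg_pos.2 (hLie y (hΩ hy.1) fun h => hy.2 (by rw [h]; exact mem_ball_self hρ))
  have hdecay : AntitoneOn (fun t => V (x t) + a * t) (Ici 0) :=
    hx.antitoneOn_comp_add_mul (hV.differentiable one_ne_zero) (convex_Ici 0) fun t ht =>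
      le_neg.1 (ha_le _ ⟨hx_mem t ht, hout t ht⟩)
  have hV0 := hV_nonneg _ (hΩ (hx_mem 0 le_rfl))
  set T := V (x 0) / a + 1
  have hT : 0 ≤ T := by positivity
  have hVT := hV_nonneg _ (hΩ (hx_mem T hT))
  have hdecayT : V (x T) + a * T ≤ V (x 0) := by simpa using hdecay self_mem_Ici hT hT
  have haT : a * T = V (x 0) + a := by rw [mul_add, mul_div_cancel₀ _ ha.ne', mul_one]
  linarith

end IsSolution

theorem lie_nonpos_of_lie_neg (hfe : f xe = 0)
    (hLie : ∀ y ∈ Ω, y ≠ xe → fderiv ℝ V y (f y) < 0) : ∀ y ∈ Ω, fderiv ℝ V y (f y) ≤ 0 := by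
  intro y hy
  rcases eq_or_ne y xe with rfl | hne
  · simp [hfe]
  · exact (hLie y hy hne).le

theorem exists_forall_mem_ball_of_lyapunov [ProperSpace E] (hV : Differentiable ℝ V)
    (hVe : V xe = 0) (hVpos : ∀ y ∈ Ω, y ≠ xe → 0 < V y)
    (hLie : ∀ y ∈ Ω, fderiv ℝ V y (f y) ≤ 0) {r : ℝ} (hr : 0 < r) (hΩ : closedBall xe r ⊆ Ω) :
    ∃ δ > 0, ∀ x, IsSolution f x → x 0 ∈ ball xe δ → ∀ t ≥ 0, x t ∈ ball xe r := by
  obtain ⟨m, hm, hm_le⟩ := (isCompact_sphere xe r).exists_forall_le'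
    hV.continuous.continuousOn (a := 0) fun y hy =>
      hVpos y (hΩ (sphere_subset_closedBall hy)) (ne_of_mem_sphere hy hr.ne')
  obtain ⟨δ, hδ, hδ_sub⟩ := Metric.isOpen_iff.1 (isOpen_lt hV.continuous continuous_const) xe
    (show V xe < m by rwa [hVe])
  refine ⟨min δ r, lt_min hδ hr, fun x hx hx0 t ht => ?_⟩
  exact hx.mem_ball_of_lt_sphere hV hLie hΩ (ball_subset_ball (min_le_right _ _) hx0)
    (fun y hy => (hδ_sub (ball_subset_ball (min_le_left _ _) hx0)).trans_le (hm_le y hy)) ht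

theorem lyapunov_stable [ProperSpace E] (hV : Differentiable ℝ V) (hΩ : IsOpen Ω) (hxe : xe ∈ Ω)
    (hVe : V xe = 0) (hVpos : ∀ y ∈ Ω, y ≠ xe → 0 < V y)
    (hLie : ∀ y ∈ Ω, fderiv ℝ V y (f y) ≤ 0) :
    ∀ ε > 0, ∃ δ > 0, ∀ x, IsSolution f x → x 0 ∈ ball xe δ → ∀ t ≥ 0, x t ∈ ball xe ε := by
  intro ε hε
  obtain ⟨r, hr, hr_sub⟩ := nhds_basis_closedBall.mem_iff.1 (hΩ.mem_nhds hxe)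
  obtain ⟨δ, hδ, hδ_stable⟩ := exists_forall_mem_ball_of_lyapunov hV hVe hVpos hLie
    (lt_min hε hr) ((closedBall_subset_closedBall (min_le_right _ _)).trans hr_sub)
  exact ⟨δ, hδ, fun x hx hx0 t ht => ball_subset_ball (min_le_left _ _) (hδ_stable x hx hx0 t ht)⟩

theorem lyapunov_attractive [ProperSpace E] (hV : ContDiff ℝ 1 V) (hf : Continuous f)
    (hΩ : IsOpen Ω) (hxe : xe ∈ Ω) (hVe : V xe = 0) (hVpos : ∀ y ∈ Ω, y ≠ xe → 0 < V y)
    (hLie : ∀ y ∈ Ω, y ≠ xe → fderiv ℝ V y (f y) < 0) (hfe : f xe = 0) :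
    ∃ δ > 0, ∀ x, IsSolution f x → x 0 ∈ ball xe δ → Tendsto x atTop (𝓝 xe) := by
  have hV' := hV.differentiable one_ne_zero
  have hLie' := lie_nonpos_of_lie_neg hfe hLie
  have hV_nonneg : ∀ y ∈ Ω, 0 ≤ V y := fun y hy => by
    rcases eq_or_ne y xe with rfl | hne
    exacts [hVe.ge, (hVpos y hy hne).le]
  obtain ⟨r, hr, hr_sub⟩ := nhds_basis_closedBall.mem_iff.1 (hΩ.mem_nhds hxe)
  obtain ⟨δ, hδ, hδ_stable⟩ := exists_forall_mem_ball_of_lyapunov hV' hVe hVpos hLie' hr hr_sub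
  refine ⟨δ, hδ, fun x hx hx0 => nhds_basis_ball.tendsto_right_iff.2 fun ε hε => ?_⟩
  obtain ⟨δ', hδ', hδ'_stable⟩ := lyapunov_stable hV' hΩ hxe hVe hVpos hLie' ε hε
  obtain ⟨T, -, hxT⟩ := hx.exists_mem_ball hV hf hV_nonneg hLie hr_sub
    (fun t ht => ball_subset_closedBall (hδ_stable x hx hx0 t ht)) hδ'
  filter_upwards [eventually_ge_atTop T] with t ht
  simpa using hδ'_stable _ (hx.comp_add_const T) (by simpa using hxT) (t - T) (sub_nonneg.2 ht)

theorem stmt_3 {n : ℕ} (f : (Fin n → ℝ) → (Fin n → ℝ))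
    (V : (Fin n → ℝ) → ℝ) (xe : Fin n → ℝ)
    (Ω : Set (Fin n → ℝ)) (hΩ : IsOpen Ω) (hxe : xe ∈ Ω)
    (hV : ContDiff ℝ 1 V) (hVe : V xe = 0)
    (hVpos : ∀ x ∈ Ω, x ≠ xe → 0 < V x)
    (hLie : ∀ x ∈ Ω, x ≠ xe → fderiv ℝ V x (f x) < 0)
    (hf : LocallyLipschitz f) (hfe : f xe = 0) :
    (∀ ε > 0, ∃ δ > 0, ∀ x : ℝ → (Fin n → ℝ),
      (∀ t, HasDerivAt x (f (x t)) t) → ‖x 0 - xe‖ < δ →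
      ∀ t ≥ (0 : ℝ), ‖x t - xe‖ < ε) ∧
    (∃ δ > 0, ∀ x : ℝ → (Fin n → ℝ),
      (∀ t, HasDerivAt x (f (x t)) t) → ‖x 0 - xe‖ < δ →
      Filter.Tendsto x Filter.atTop (nhds xe)) := by
  simp only [← mem_ball_iff_norm]
  exact ⟨lyapunov_stable (hV.differentiable one_ne_zero) hΩ hxe hVe hVpos
      (lie_nonpos_of_lie_neg hfe hLie),
    lyapunov_attractive hV hf.continuous hΩ hxe hVe hVpos hLie hfe⟩
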